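/- Let P₁ be positive definite and P₂ positive semidefinite complex n×n matrices, and Σ Hermitian positive definite. Then the spectral radius of Γ = (Σ + P₁)^{-1}(Σ - P₂)(Σ + P₂)^{-1}(Σ - P₁) is strictly less than 1. -/

import Mathlib

open Matrix ComplexOrder

noncomputable def specNorm {n : ℕ} (M : Matrix (Fin n) (Fin n) ℂ) : ℝ :=
  ‖Matrix.toEuclideanCLM (𝕜 := ℂ) M‖

noncomputable def evnorm {n : ℕ} (x : Fin n → ℂ) : ℝ :=
  ‖(WithLp.equiv 2 (Fin n → ℂ)).symm x‖

/-- `P` is positive semidefinite in the (possibly non-Hermitian) sense: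
`Re (x* P x) ≥ 0` for all `x`. -/
def IsPSD {n : ℕ} (P : Matrix (Fin n) (Fin n) ℂ) : Prop :=
  ∀ x : Fin n → ℂ, 0 ≤ (star x ⬝ᵥ P *ᵥ x).re

/-- `P` is positive definite in the (possibly non-Hermitian) sense:
`Re (x* P x) > 0` for all nonzero `x`. -/
def IsPD {n : ℕ} (P : Matrix (Fin n) (Fin n) ℂ) : Prop :=
  ∀ x : Fin n → ℂ, x ≠ 0 → 0 < (star x ⬝ᵥ P *ᵥ x).re

/-- The old `Matrix.PosSemidef.sqrt` (removed from Mathlib), with its original definition. -/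
noncomputable def psdSqrt {n : ℕ} {A : Matrix (Fin n) (Fin n) ℂ} (hA : A.PosSemidef) :
    Matrix (Fin n) (Fin n) ℂ :=
  hA.1.eigenvectorUnitary.1 * diagonal ((↑) ∘ (√·) ∘ hA.1.eigenvalues) *
    (star hA.1.eigenvectorUnitary : Matrix (Fin n) (Fin n) ℂ)

/-- `Σ^{-1/2} P Σ^{-1/2}` where `Σ^{1/2}` is the HPD square root of the HPD matrix `Sg`. -/
noncomputable def tild {n : ℕ} (Sg P : Matrix (Fin n) (Fin n) ℂ) (hS : Sg.PosDef) :
    Matrix (Fin n) (Fin n) ℂ :=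
  (psdSqrt hS.posSemidef)⁻¹ * P * (psdSqrt hS.posSemidef)⁻¹

section Helpers

variable {n : ℕ}

lemma psdSqrt_mul_self {A : Matrix (Fin n) (Fin n) ℂ} (hA : A.PosSemidef) :
    psdSqrt hA * psdSqrt hA = A := by
  have hUU : (star hA.1.eigenvectorUnitary : Matrix (Fin n) (Fin n) ℂ) *
      (hA.1.eigenvectorUnitary : Matrix (Fin n) (Fin n) ℂ) = 1 := Unitary.coe_star_mul_self _
  have hD : diagonal (((↑) ∘ (√·) ∘ hA.1.eigenvalues : Fin n → ℂ)) *
      diagonal ((↑) ∘ (√·) ∘ hA.1.eigenvalues) = diagonal (RCLike.ofReal ∘ hA.1.eigenvalues) := by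
    rw [diagonal_mul_diagonal]
    congr 1
    funext i
    simp only [Function.comp_apply]
    rw [← Complex.ofReal_mul, Real.mul_self_sqrt (hA.eigenvalues_nonneg i)]
    rfl
  conv_rhs => rw [hA.1.spectral_theorem, Unitary.conjStarAlgAut_apply]
  rw [psdSqrt, ← hD]
  simp only [Matrix.mul_assoc]
  rw [← Matrix.mul_assoc _ _ (diagonal _ * _), hUU, Matrix.one_mul]

lemma psdSqrt_isHermitian {A : Matrix (Fin n) (Fin n) ℂ} (hA : A.PosSemidef) :
    (psdSqrt hA).IsHermitian := by
  unfold psdSqrt IsHermitian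
  rw [conjTranspose_mul, conjTranspose_mul, diagonal_conjTranspose, Matrix.mul_assoc]
  rw [← Matrix.star_eq_conjTranspose, ← Matrix.star_eq_conjTranspose, star_star]
  congr 2
  congr 1
  funext i
  simp [Complex.conj_ofReal]

lemma IsPD.isPSD {P : Matrix (Fin n) (Fin n) ℂ} (h : IsPD P) : IsPSD P := by
  intro x
  by_cases hx : x = 0
  · subst hx; simp
  · exact (h x hx).le

lemma Matrix.PosDef.isPD {M : Matrix (Fin n) (Fin n) ℂ} (h : M.PosDef) : IsPD M :=
  fun _ hx => h.re_dotProduct_pos hx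

lemma isPD_add {P Q : Matrix (Fin n) (Fin n) ℂ} (hP : IsPD P) (hQ : IsPSD Q) :
    IsPD (P + Q) := by
  intro x hx
  rw [add_mulVec, dotProduct_add, Complex.add_re]
  exact add_pos_of_pos_of_nonneg (hP x hx) (hQ x)

lemma IsPD.isUnit {P : Matrix (Fin n) (Fin n) ℂ} (h : IsPD P) : IsUnit P := by
  rw [Matrix.isUnit_iff_isUnit_det, isUnit_iff_ne_zero]
  intro hdet
  obtain ⟨v, hv, hv0⟩ := (Matrix.exists_mulVec_eq_zero_iff).mpr hdet
  have := h v hv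
  rw [hv0] at this
  simp at this

lemma re_dot_self_pos {x : Fin n → ℂ} (hx : x ≠ 0) : 0 < (star x ⬝ᵥ x).re := by
  have h : (star x ⬝ᵥ x) = inner ℂ ((WithLp.equiv 2 (Fin n → ℂ)).symm x)
      ((WithLp.equiv 2 (Fin n → ℂ)).symm x) := by
    rw [dotProduct_comm]; rfl
  have hx' : ((WithLp.equiv 2 (Fin n → ℂ)).symm x) ≠ 0 := fun h0 =>
    hx (by simpa using congrArg (WithLp.equiv 2 (Fin n → ℂ)) h0)
  have h2 := inner_self_eq_norm_sq (𝕜 := ℂ) ((WithLp.equiv 2 (Fin n → ℂ)).symm x)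
  simp only [RCLike.re_to_complex] at h2
  rw [h, h2]
  have hne : ‖(WithLp.equiv 2 (Fin n → ℂ)).symm x‖ ≠ 0 := norm_ne_zero_iff.mpr hx'
  positivity

lemma onePlus_isPD {P : Matrix (Fin n) (Fin n) ℂ} (h : IsPSD P) : IsPD (1 + P) := by
  intro x hx
  rw [add_mulVec, dotProduct_add, Complex.add_re, one_mulVec]
  exact add_pos_of_pos_of_nonneg (re_dot_self_pos hx) (h x)

lemma inner_toEuclideanCLM (A : Matrix (Fin n) (Fin n) ℂ) (z : EuclideanSpace ℂ (Fin n)) :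
    (inner ℂ z ((Matrix.toEuclideanCLM (𝕜 := ℂ) (n := Fin n) A) z) : ℂ)
      = star (WithLp.equiv 2 (Fin n → ℂ) z) ⬝ᵥ A *ᵥ (WithLp.equiv 2 (Fin n → ℂ) z) := by
  simp only [EuclideanSpace.inner_eq_star_dotProduct, Matrix.ofLp_toEuclideanCLM, WithLp.equiv_apply,
    Matrix.toLin'_apply]
  rw [dotProduct_comm]

lemma le_of_sq_le_sq' {a b : ℝ} (hb : 0 ≤ b) (h : a ^ 2 ≤ b ^ 2) : a ≤ b := by nlinarith

lemma lt_of_sq_lt_sq' {a b : ℝ} (hb : 0 ≤ b) (h : a ^ 2 < b ^ 2) : a < b := by nlinarith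

lemma cayley_sq (A : Matrix (Fin n) (Fin n) ℂ) (z : EuclideanSpace ℂ (Fin n)) :
    ‖(Matrix.toEuclideanCLM (𝕜 := ℂ) (n := Fin n) (1 + A)) z‖ ^ 2
      = ‖(Matrix.toEuclideanCLM (𝕜 := ℂ) (n := Fin n) (1 - A)) z‖ ^ 2
        + 4 * (star (WithLp.equiv 2 (Fin n → ℂ) z) ⬝ᵥ A *ᵥ (WithLp.equiv 2 (Fin n → ℂ) z)).re := by
  have h1 : (Matrix.toEuclideanCLM (𝕜 := ℂ) (n := Fin n) (1 + A)) z = z + (Matrix.toEuclideanCLM (𝕜 := ℂ) (n := Fin n) A) z := by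
    rw [map_add, _root_.map_one]
    simp [ContinuousLinearMap.add_apply]
  have h2 : (Matrix.toEuclideanCLM (𝕜 := ℂ) (n := Fin n) (1 - A)) z = z - (Matrix.toEuclideanCLM (𝕜 := ℂ) (n := Fin n) A) z := by
    rw [map_sub, _root_.map_one]
    simp [ContinuousLinearMap.sub_apply]
  rw [h1, h2, norm_add_sq (𝕜 := ℂ), norm_sub_sq (𝕜 := ℂ)]
  have := inner_toEuclideanCLM A z
  have hre : RCLike.re (inner ℂ z ((Matrix.toEuclideanCLM (𝕜 := ℂ) (n := Fin n) A) z) : ℂ)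
      = (star (WithLp.equiv 2 (Fin n → ℂ) z) ⬝ᵥ A *ᵥ (WithLp.equiv 2 (Fin n → ℂ) z)).re := by
    rw [this]; rfl
  rw [hre]
  ring

lemma cayley_pointwise_le {A : Matrix (Fin n) (Fin n) ℂ} (hA : IsPSD A)
    (z : EuclideanSpace ℂ (Fin n)) :
    ‖(Matrix.toEuclideanCLM (𝕜 := ℂ) (n := Fin n) (1 - A)) z‖ ≤ ‖(Matrix.toEuclideanCLM (𝕜 := ℂ) (n := Fin n) (1 + A)) z‖ := by
  refine le_of_sq_le_sq' (norm_nonneg _) ?_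
  rw [cayley_sq]
  have := hA (WithLp.equiv 2 (Fin n → ℂ) z)
  linarith

lemma cayley_pointwise_lt {A : Matrix (Fin n) (Fin n) ℂ} (hA : IsPD A)
    {z : EuclideanSpace ℂ (Fin n)} (hz : z ≠ 0) :
    ‖(Matrix.toEuclideanCLM (𝕜 := ℂ) (n := Fin n) (1 - A)) z‖ < ‖(Matrix.toEuclideanCLM (𝕜 := ℂ) (n := Fin n) (1 + A)) z‖ := by
  refine lt_of_sq_lt_sq' (norm_nonneg _) ?_
  rw [cayley_sq]
  have hz' : (WithLp.equiv 2 (Fin n → ℂ) z) ≠ 0 := by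
    intro h
    apply hz
    have := congrArg (WithLp.equiv 2 (Fin n → ℂ)).symm h
    simpa using this
  have := hA (WithLp.equiv 2 (Fin n → ℂ) z) hz'
  linarith

lemma cayley_apply_le {A : Matrix (Fin n) (Fin n) ℂ} (hA : IsPSD A)
    (y : EuclideanSpace ℂ (Fin n)) :
    ‖(Matrix.toEuclideanCLM (𝕜 := ℂ) (n := Fin n) ((1 - A) * (1 + A)⁻¹)) y‖ ≤ ‖y‖ := by
  have hU : IsUnit (1 + A) := (onePlus_isPD hA).isUnit
  have hUd : IsUnit (1 + A).det := (Matrix.isUnit_iff_isUnit_det _).mp hU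
  set z := (Matrix.toEuclideanCLM (𝕜 := ℂ) (n := Fin n) ((1 + A)⁻¹)) y with hz
  have happ : (Matrix.toEuclideanCLM (𝕜 := ℂ) (n := Fin n) ((1 - A) * (1 + A)⁻¹)) y
      = (Matrix.toEuclideanCLM (𝕜 := ℂ) (n := Fin n) (1 - A)) z := by
    rw [_root_.map_mul]; rfl
  have hy : (Matrix.toEuclideanCLM (𝕜 := ℂ) (n := Fin n) (1 + A)) z = y := by
    rw [hz, ← ContinuousLinearMap.mul_apply, ← _root_.map_mul, Matrix.mul_nonsing_inv _ hUd, _root_.map_one,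
      ContinuousLinearMap.one_apply]
  calc ‖(Matrix.toEuclideanCLM (𝕜 := ℂ) (n := Fin n) ((1 - A) * (1 + A)⁻¹)) y‖
      = ‖(Matrix.toEuclideanCLM (𝕜 := ℂ) (n := Fin n) (1 - A)) z‖ := by rw [happ]
    _ ≤ ‖(Matrix.toEuclideanCLM (𝕜 := ℂ) (n := Fin n) (1 + A)) z‖ := cayley_pointwise_le hA z
    _ = ‖y‖ := by rw [hy]

lemma cayley_apply_lt {A : Matrix (Fin n) (Fin n) ℂ} (hA : IsPD A)
    {y : EuclideanSpace ℂ (Fin n)} (hy0 : y ≠ 0) :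
    ‖(Matrix.toEuclideanCLM (𝕜 := ℂ) (n := Fin n) ((1 - A) * (1 + A)⁻¹)) y‖ < ‖y‖ := by
  have hU : IsUnit (1 + A) := (onePlus_isPD hA.isPSD).isUnit
  have hUd : IsUnit (1 + A).det := (Matrix.isUnit_iff_isUnit_det _).mp hU
  set z := (Matrix.toEuclideanCLM (𝕜 := ℂ) (n := Fin n) ((1 + A)⁻¹)) y with hz
  have happ : (Matrix.toEuclideanCLM (𝕜 := ℂ) (n := Fin n) ((1 - A) * (1 + A)⁻¹)) y
      = (Matrix.toEuclideanCLM (𝕜 := ℂ) (n := Fin n) (1 - A)) z := by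
    rw [_root_.map_mul]; rfl
  have hy : (Matrix.toEuclideanCLM (𝕜 := ℂ) (n := Fin n) (1 + A)) z = y := by
    rw [hz, ← ContinuousLinearMap.mul_apply, ← _root_.map_mul, Matrix.mul_nonsing_inv _ hUd, _root_.map_one,
      ContinuousLinearMap.one_apply]
  have hzne : z ≠ 0 := by
    intro h
    apply hy0
    rw [← hy, h, map_zero]
  calc ‖(Matrix.toEuclideanCLM (𝕜 := ℂ) (n := Fin n) ((1 - A) * (1 + A)⁻¹)) y‖
      = ‖(Matrix.toEuclideanCLM (𝕜 := ℂ) (n := Fin n) (1 - A)) z‖ := by rw [happ]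
    _ < ‖(Matrix.toEuclideanCLM (𝕜 := ℂ) (n := Fin n) (1 + A)) z‖ := cayley_pointwise_lt hA hzne
    _ = ‖y‖ := by rw [hy]

lemma opNorm_lt_one_of_forall {f : EuclideanSpace ℂ (Fin n) →L[ℂ] EuclideanSpace ℂ (Fin n)}
    (h : ∀ y : EuclideanSpace ℂ (Fin n), y ≠ 0 → ‖f y‖ < ‖y‖) : ‖f‖ < 1 := by
  rcases Nat.eq_zero_or_pos n with hn | hn
  · have hf : ‖f‖ ≤ 0 := by
      refine f.opNorm_le_bound le_rfl fun x => ?_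
      subst hn
      have hx : x = 0 := Subsingleton.elim x 0
      simp [hx]
    linarith
  · obtain ⟨x₀, hx₀mem, hmax⟩ :=
      (isCompact_sphere (0 : EuclideanSpace ℂ (Fin n)) 1).exists_isMaxOn
        ⟨EuclideanSpace.single ⟨0, hn⟩ (1 : ℂ), by
          simp [mem_sphere_zero_iff_norm, EuclideanSpace.norm_single]⟩
        ((continuous_norm.comp f.continuous).continuousOn)
    have hx₀norm : ‖x₀‖ = 1 := mem_sphere_zero_iff_norm.mp hx₀mem
    have hx₀ne : x₀ ≠ 0 := by
      intro h0
      rw [h0] at hx₀norm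
      simp at hx₀norm
    have hbound : ‖f‖ ≤ ‖f x₀‖ := by
      refine f.opNorm_le_bound (norm_nonneg _) fun x => ?_
      by_cases hx : x = 0
      · simp [hx]
      · have hxn : ‖x‖ ≠ 0 := norm_ne_zero_iff.mpr hx
        have hxs : (‖x‖⁻¹ • x) ∈ Metric.sphere (0 : EuclideanSpace ℂ (Fin n)) 1 := by
          simp [mem_sphere_zero_iff_norm, norm_smul, abs_of_nonneg (inv_nonneg.mpr (norm_nonneg x)),
            inv_mul_cancel₀ hxn]
        have hle : ‖f (‖x‖⁻¹ • x)‖ ≤ ‖f x₀‖ := hmax hxs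
        rw [f.map_smul_of_tower, norm_smul] at hle
        have : ‖(‖x‖⁻¹ : ℝ)‖ * ‖f x‖ ≤ ‖f x₀‖ := hle
        rw [Real.norm_eq_abs, abs_of_nonneg (inv_nonneg.mpr (norm_nonneg x))] at this
        calc ‖f x‖ = ‖x‖ * (‖x‖⁻¹ * ‖f x‖) := by field_simp
          _ ≤ ‖x‖ * ‖f x₀‖ := by
              exact mul_le_mul_of_nonneg_left this (norm_nonneg x)
          _ = ‖f x₀‖ * ‖x‖ := by ring
    calc ‖f‖ ≤ ‖f x₀‖ := hbound
      _ < ‖x₀‖ := h x₀ hx₀ne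
      _ = 1 := hx₀norm

lemma cayley_norm_le {A : Matrix (Fin n) (Fin n) ℂ} (hA : IsPSD A) :
    ‖Matrix.toEuclideanCLM (𝕜 := ℂ) (n := Fin n) ((1 - A) * (1 + A)⁻¹)‖ ≤ 1 := by
  refine ContinuousLinearMap.opNorm_le_bound _ zero_le_one fun y => ?_
  rw [one_mul]
  exact cayley_apply_le hA y

lemma cayley_norm_lt {A : Matrix (Fin n) (Fin n) ℂ} (hA : IsPD A) :
    ‖Matrix.toEuclideanCLM (𝕜 := ℂ) (n := Fin n) ((1 - A) * (1 + A)⁻¹)‖ < 1 :=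
  opNorm_lt_one_of_forall fun _ hy => cayley_apply_lt hA hy

lemma sqrt_det_isUnit {Sg : Matrix (Fin n) (Fin n) ℂ} (hS : Sg.PosDef) :
    IsUnit (psdSqrt hS.posSemidef).det := by
  have h : (psdSqrt hS.posSemidef).det * (psdSqrt hS.posSemidef).det = Sg.det := by
    rw [← Matrix.det_mul, psdSqrt_mul_self hS.posSemidef]
  have hne : Sg.det ≠ 0 := hS.det_pos.ne'
  rw [isUnit_iff_ne_zero]
  intro h0
  rw [h0, zero_mul] at h
  exact hne h.symm

lemma tild_dot (Sg P : Matrix (Fin n) (Fin n) ℂ) (hS : Sg.PosDef) (x : Fin n → ℂ) :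
    star x ⬝ᵥ (tild Sg P hS) *ᵥ x
      = star ((psdSqrt hS.posSemidef)⁻¹ *ᵥ x) ⬝ᵥ P *ᵥ ((psdSqrt hS.posSemidef)⁻¹ *ᵥ x) := by
  have hH : ((psdSqrt hS.posSemidef)⁻¹)ᴴ = (psdSqrt hS.posSemidef)⁻¹ :=
    (psdSqrt_isHermitian hS.posSemidef).inv
  rw [tild, ← Matrix.mulVec_mulVec, ← Matrix.mulVec_mulVec, Matrix.dotProduct_mulVec,
    star_mulVec, hH]

lemma tild_isPSD {Sg P : Matrix (Fin n) (Fin n) ℂ} (hP : IsPSD P) (hS : Sg.PosDef) :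
    IsPSD (tild Sg P hS) := by
  intro x
  rw [tild_dot]
  exact hP _

lemma tild_isPD {Sg P : Matrix (Fin n) (Fin n) ℂ} (hP : IsPD P) (hS : Sg.PosDef) :
    IsPD (tild Sg P hS) := by
  intro x hx
  rw [tild_dot]
  refine hP _ fun h0 => hx ?_
  have hdet := sqrt_det_isUnit hS
  have : psdSqrt hS.posSemidef *ᵥ ((psdSqrt hS.posSemidef)⁻¹ *ᵥ x) = x := by
    rw [Matrix.mulVec_mulVec, Matrix.mul_nonsing_inv _ hdet, Matrix.one_mulVec]
  rw [← this, h0, Matrix.mulVec_zero]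

end Helpers

theorem stmt10 {n : ℕ} (P1 P2 Sg : Matrix (Fin n) (Fin n) ℂ)
    (h1 : IsPD P1) (h2 : IsPSD P2) (hS : Sg.PosDef) :
    spectralRadius ℂ ((Sg + P1)⁻¹ * (Sg - P2) * (Sg + P2)⁻¹ * (Sg - P1)) < 1 := by
  classical
  rcases Nat.eq_zero_or_pos n with hn | hn
  · subst hn
    haveI : Subsingleton (Matrix (Fin 0) (Fin 0) ℂ) :=
      ⟨fun a b => by ext i; exact i.elim0⟩
    have hempty : spectrum ℂ ((Sg + P1)⁻¹ * (Sg - P2) * (Sg + P2)⁻¹ * (Sg - P1)) = ∅ := by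
      ext k
      simp [spectrum.mem_iff, isUnit_of_subsingleton]
    rw [spectralRadius, hempty]
    simp
  · haveI : Nontrivial (EuclideanSpace ℂ (Fin n)) := by
      refine ⟨⟨EuclideanSpace.single ⟨0, hn⟩ (1 : ℂ), 0, fun h => ?_⟩⟩
      have := congrArg norm h
      rw [EuclideanSpace.norm_single] at this
      simp at this
    set S := psdSqrt hS.posSemidef with hSdef
    have hdetS : IsUnit S.det := sqrt_det_isUnit hS
    have hSS : S * S = Sg := psdSqrt_mul_self hS.posSemidef
    set A1 := tild Sg P1 hS with hA1def
    set A2 := tild Sg P2 hS with hA2def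
    have hA1 : IsPD A1 := tild_isPD h1 hS
    have hA2 : IsPSD A2 := tild_isPSD h2 hS
    have hU1 : IsUnit (Sg + P1) := (isPD_add hS.isPD h1.isPSD).isUnit
    have hU2 : IsUnit (Sg + P2) := (isPD_add hS.isPD h2).isUnit
    have hU1d : IsUnit (Sg + P1).det := (Matrix.isUnit_iff_isUnit_det _).mp hU1
    have hU2d : IsUnit (Sg + P2).det := (Matrix.isUnit_iff_isUnit_det _).mp hU2
    have hSinvS : S⁻¹ * S = 1 := Matrix.nonsing_inv_mul _ hdetS
    have hSSinv : S * S⁻¹ = 1 := Matrix.mul_nonsing_inv _ hdetS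
    have c1 : ∀ X : Matrix (Fin n) (Fin n) ℂ, S⁻¹ * (S * X) = X := fun X => by
      rw [← Matrix.mul_assoc, hSinvS, Matrix.one_mul]
    have c2 : ∀ X : Matrix (Fin n) (Fin n) ℂ, S * (S⁻¹ * X) = X := fun X => by
      rw [← Matrix.mul_assoc, hSSinv, Matrix.one_mul]
    have hSgconj : S⁻¹ * Sg * S⁻¹ = 1 := by
      rw [← hSS, ← Matrix.mul_assoc, Matrix.mul_assoc S⁻¹ S S, ← Matrix.mul_assoc,
        hSinvS, Matrix.one_mul, hSSinv]
    have e1 : ∀ P : Matrix (Fin n) (Fin n) ℂ,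
        S⁻¹ * (Sg + P) * S⁻¹ = 1 + S⁻¹ * P * S⁻¹ := fun P => by
      rw [Matrix.mul_add, Matrix.add_mul, hSgconj]
    have e2 : ∀ P : Matrix (Fin n) (Fin n) ℂ,
        S⁻¹ * (Sg - P) * S⁻¹ = 1 - S⁻¹ * P * S⁻¹ := fun P => by
      rw [Matrix.mul_sub, Matrix.sub_mul, hSgconj]
    have f1 : (1 : Matrix (Fin n) (Fin n) ℂ) - A1 = S⁻¹ * (Sg - P1) * S⁻¹ := (e2 P1).symm
    have f2 : (1 : Matrix (Fin n) (Fin n) ℂ) - A2 = S⁻¹ * (Sg - P2) * S⁻¹ := (e2 P2).symm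
    have g1 : ((1 : Matrix (Fin n) (Fin n) ℂ) + A1)⁻¹ = S * (Sg + P1)⁻¹ * S := by
      rw [show (1 : Matrix (Fin n) (Fin n) ℂ) + A1 = S⁻¹ * (Sg + P1) * S⁻¹ from (e1 P1).symm,
        Matrix.mul_inv_rev, Matrix.mul_inv_rev, Matrix.nonsing_inv_nonsing_inv _ hdetS,
        Matrix.mul_assoc]
    have g2 : ((1 : Matrix (Fin n) (Fin n) ℂ) + A2)⁻¹ = S * (Sg + P2)⁻¹ * S := by
      rw [show (1 : Matrix (Fin n) (Fin n) ℂ) + A2 = S⁻¹ * (Sg + P2) * S⁻¹ from (e1 P2).symm,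
        Matrix.mul_inv_rev, Matrix.mul_inv_rev, Matrix.nonsing_inv_nonsing_inv _ hdetS,
        Matrix.mul_assoc]
    set T := (1 - A2) * (1 + A2)⁻¹ * (1 - A1) * (1 + A1)⁻¹ with hTdef
    have hP1c : (Sg + P1)⁻¹ * (Sg + P1) = 1 := Matrix.nonsing_inv_mul _ hU1d
    have c3 : ∀ X : Matrix (Fin n) (Fin n) ℂ, (Sg + P1)⁻¹ * ((Sg + P1) * X) = X := fun X => by
      rw [← Matrix.mul_assoc, hP1c, Matrix.one_mul]
    -- similarity
    set U := (Sg + P1)⁻¹ * S with hUdef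
    have hUu : IsUnit U := by
      rw [Matrix.isUnit_iff_isUnit_det, Matrix.det_mul]
      exact ((Matrix.isUnit_nonsing_inv_det _ hU1d)).mul hdetS
    have hUinv : U⁻¹ = S⁻¹ * (Sg + P1) := by
      rw [hUdef, Matrix.mul_inv_rev, Matrix.nonsing_inv_nonsing_inv _ hU1d]
    have key : (Sg + P1)⁻¹ * (Sg - P2) * (Sg + P2)⁻¹ * (Sg - P1) = U * T * U⁻¹ := by
      rw [hTdef, hUdef, hUinv, f1, f2, g1, g2]
      simp only [Matrix.mul_assoc, c1, c2, c3, hP1c, Matrix.mul_one]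
    have hUdet : IsUnit U := hUu
    have hspec : spectrum ℂ ((Sg + P1)⁻¹ * (Sg - P2) * (Sg + P2)⁻¹ * (Sg - P1))
        = spectrum ℂ T := by
      rw [key, ← hUdet.unit_spec, ← Matrix.coe_units_inv]
      exact spectrum.units_conjugate
    have hspec2 : spectrum ℂ T = spectrum ℂ (Matrix.toEuclideanCLM (𝕜 := ℂ) (n := Fin n) T) := by
      exact (AlgEquiv.spectrum_eq (Matrix.toEuclideanCLM (𝕜 := ℂ) (n := Fin n)) T).symm
    rw [spectralRadius, hspec, hspec2, ← spectralRadius]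
    refine lt_of_le_of_lt (spectrum.spectralRadius_le_nnnorm (𝕜 := ℂ) _) ?_
    have hnorm : ‖Matrix.toEuclideanCLM (𝕜 := ℂ) (n := Fin n) T‖ < 1 := by
      have hTsplit : T = ((1 - A2) * (1 + A2)⁻¹) * ((1 - A1) * (1 + A1)⁻¹) := by
        rw [hTdef]; exact Matrix.mul_assoc _ _ _
      rw [hTsplit, _root_.map_mul]
      calc ‖Matrix.toEuclideanCLM (𝕜 := ℂ) (n := Fin n) ((1 - A2) * (1 + A2)⁻¹)
              * Matrix.toEuclideanCLM (𝕜 := ℂ) (n := Fin n) ((1 - A1) * (1 + A1)⁻¹)‖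
          ≤ ‖Matrix.toEuclideanCLM (𝕜 := ℂ) (n := Fin n) ((1 - A2) * (1 + A2)⁻¹)‖
              * ‖Matrix.toEuclideanCLM (𝕜 := ℂ) (n := Fin n) ((1 - A1) * (1 + A1)⁻¹)‖ := norm_mul_le _ _
        _ ≤ 1 * ‖Matrix.toEuclideanCLM (𝕜 := ℂ) (n := Fin n) ((1 - A1) * (1 + A1)⁻¹)‖ :=
            mul_le_mul_of_nonneg_right (cayley_norm_le hA2) (norm_nonneg _)
        _ = ‖Matrix.toEuclideanCLM (𝕜 := ℂ) (n := Fin n) ((1 - A1) * (1 + A1)⁻¹)‖ := one_mul _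
        _ < 1 := cayley_norm_lt hA1
    have : ‖Matrix.toEuclideanCLM (𝕜 := ℂ) (n := Fin n) T‖₊ < 1 := by
      rw [← NNReal.coe_lt_coe, coe_nnnorm, NNReal.coe_one]
      exact hnorm
    exact_mod_cast this
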